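/- Let s=(s₁,s₂):[t₀,t₁]→ℝ² be a solution of the explicit slow-down system, and let (ζ₁,ζ₂):[t₀,t₁]→ℝ² be a differentiable solution of the variational equations dζ₁/dt = (log λ)·((ψ(u)+2s₁²ψ'(u))ζ₁ + 2s₁s₂ψ'(u)ζ₂), dζ₂/dt = −(log λ)·(2s₁s₂ψ'(u)ζ₁ + (ψ(u)+2s₂²ψ'(u))ζ₂), where u = s₁(t)²+s₂(t)², ψ(u)=(u/r₀)^α and ψ'(u)=(α/r₀^α)u^{α−1}. Then: (a) if s₁(t)²+s₂(t)² ≤ r₀/2 for all t∈[t₀,t₁], then ‖ζ(t)‖ ≤ λ^{(1+2α)(t−t₀)}·‖ζ(t₀)‖ for all t∈[t₀,t₁]; (b) if moreover s₁(t)²+s₂(t)² ≤ r₀/8 for all t∈[t₀,t₁], then ‖ζ(t)‖ ≤ λ^{t−t₀}·‖ζ(t₀)‖ for all t∈[t₀,t₁]. Here ‖ζ(t)‖ denotes the Euclidean norm of (ζ₁(t),ζ₂(t)). -/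

import Mathlib

/-!
Writing `N = ζ₁² + ζ₂²`, the variational equations give `N' = 2 log λ · Q(ζ)` for a quadratic
form `Q` bounded by `(ψ + 2uψ'(u)) N = (1 + 2α) ψ(u) N`, because `u ψ'(u) = α ψ(u)`.
Grönwall's inequality then bounds `√N` by `λ^{K(t - t₀)} √N(t₀)` whenever `(1 + 2α) ψ ≤ K`
along the orbit. On `D_{r₀/2}` we have `ψ ≤ 1`, giving `K = 1 + 2α`; on `D_{r₀/8}` we have
`ψ ≤ 8^{-α}`, and `1 + 2α ≤ 8^α` because `log 8 > 2`, giving `K = 1`.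
-/

open Set Real

namespace KatokSlowDown

/-- The slow-down function `ψ`, with `u = s₁² + s₂²`. -/
noncomputable def psi (α r₀ u : ℝ) : ℝ := (u / r₀) ^ α

/-- The derivative `ψ'` of `psi`. -/
noncomputable def psiDeriv (α r₀ u : ℝ) : ℝ := α / r₀ ^ α * u ^ (α - 1)

variable {α r₀ u : ℝ}

lemma psi_nonneg (hu : 0 ≤ u) (hr₀ : 0 ≤ r₀) : 0 ≤ psi α r₀ u :=
  rpow_nonneg (div_nonneg hu hr₀) α

lemma psiDeriv_nonneg (hα : 0 ≤ α) (hu : 0 ≤ u) (hr₀ : 0 ≤ r₀) : 0 ≤ psiDeriv α r₀ u :=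
  mul_nonneg (div_nonneg hα (rpow_nonneg hr₀ α)) (rpow_nonneg hu _)

lemma psiDeriv_mul_self (hα : α ≠ 0) (hu : 0 ≤ u) (hr₀ : 0 ≤ r₀) :
    psiDeriv α r₀ u * u = α * psi α r₀ u := by
  have hsplit : u ^ α = u ^ (α - 1) * u := by
    simpa using rpow_add' hu (y := α - 1) (z := 1) (by simpa using hα)
  rw [psi, psiDeriv, div_rpow hu hr₀, hsplit]
  ring

lemma psi_le_one (hα : 0 ≤ α) (hr₀ : 0 < r₀) (hu : 0 ≤ u) (hur : u ≤ r₀) :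
    psi α r₀ u ≤ 1 :=
  rpow_le_one (div_nonneg hu hr₀.le) ((div_le_one hr₀).2 hur) hα

lemma one_add_two_mul_le_eight_rpow (hα : 0 ≤ α) : 1 + 2 * α ≤ (8 : ℝ) ^ α := by
  have hlog8 : 2 ≤ log 8 := by
    rw [le_log_iff_exp_le (by norm_num), show (2 : ℝ) = 1 + 1 by norm_num, exp_add]
    nlinarith [exp_one_lt_d9, exp_pos 1]
  rw [rpow_def_of_pos (by norm_num)]
  nlinarith [add_one_le_exp (log 8 * α)]

lemma one_add_two_mul_mul_psi_le_one (hα : 0 ≤ α) (hr₀ : 0 < r₀) (hu : 0 ≤ u)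
    (hur : u ≤ r₀ / 8) : (1 + 2 * α) * psi α r₀ u ≤ 1 := by
  have hpsi : psi α r₀ u ≤ (1 / 8 : ℝ) ^ α :=
    rpow_le_rpow (div_nonneg hu hr₀.le) (by rw [div_le_iff₀ hr₀]; linarith) hα
  calc (1 + 2 * α) * psi α r₀ u ≤ (8 : ℝ) ^ α * (1 / 8 : ℝ) ^ α :=
        mul_le_mul (one_add_two_mul_le_eight_rpow hα) hpsi (psi_nonneg hu hr₀.le)
          (rpow_nonneg (by norm_num) α)
    _ = 1 := by rw [← mul_rpow (by norm_num) (by norm_num)]; norm_num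

end KatokSlowDown

/-- The quadratic form of the variational equations, `⟨diag(1, -1) S ζ, ζ⟩` for the symmetric
matrix `S = ψ I + 2φ s sᵀ`, is at most the top eigenvalue `ψ + 2φ|s|²` of `S` times `|ζ|²`. -/
lemma variational_quadForm_le {ψ φ : ℝ} (s₁ s₂ z₁ z₂ : ℝ) (hψ : 0 ≤ ψ) (hφ : 0 ≤ φ) :
    z₁ * ((ψ + 2 * s₁ ^ 2 * φ) * z₁ + 2 * s₁ * s₂ * φ * z₂) -
        z₂ * (2 * s₁ * s₂ * φ * z₁ + (ψ + 2 * s₂ ^ 2 * φ) * z₂) ≤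
      (ψ + 2 * φ * (s₁ ^ 2 + s₂ ^ 2)) * (z₁ ^ 2 + z₂ ^ 2) := by
  rw [← sub_nonneg]
  have hgap : (ψ + 2 * φ * (s₁ ^ 2 + s₂ ^ 2)) * (z₁ ^ 2 + z₂ ^ 2) -
      (z₁ * ((ψ + 2 * s₁ ^ 2 * φ) * z₁ + 2 * s₁ * s₂ * φ * z₂) -
        z₂ * (2 * s₁ * s₂ * φ * z₁ + (ψ + 2 * s₂ ^ 2 * φ) * z₂)) =
      2 * ψ * z₂ ^ 2 + 2 * φ * (s₂ ^ 2 * z₁ ^ 2 + s₁ ^ 2 * z₂ ^ 2 + 2 * s₂ ^ 2 * z₂ ^ 2) := by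
    ring
  rw [hgap]
  positivity

lemma le_mul_exp_of_hasDerivAt_le_mul {f f' : ℝ → ℝ} {c a b : ℝ}
    (hf : ∀ t ∈ Icc a b, HasDerivAt f (f' t) t) (bound : ∀ t ∈ Icc a b, f' t ≤ c * f t) :
    ∀ t ∈ Icc a b, f t ≤ f a * exp (c * (t - a)) := by
  intro t ht
  have := le_gronwallBound_of_liminf_deriv_right_le (f := f) (f' := f') (δ := f a) (K := c)
    (ε := 0) (fun x hx => (hf x hx).continuousAt.continuousWithinAt)
    (fun x hx _ hr => (hf x (Ico_subset_Icc_self hx)).hasDerivWithinAt.liminf_right_slope_le hr)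
    le_rfl (fun x hx => by simpa using bound x (Ico_subset_Icc_self hx)) t ht
  rwa [gronwallBound_ε0] at this

lemma sqrt_le_rpow_mul_sqrt_of_hasDerivAt_le {f f' : ℝ → ℝ} {lam K a b : ℝ} (hlam : 0 < lam)
    (hf : ∀ t ∈ Icc a b, HasDerivAt f (f' t) t)
    (bound : ∀ t ∈ Icc a b, f' t ≤ 2 * log lam * K * f t) :
    ∀ t ∈ Icc a b, √(f t) ≤ lam ^ (K * (t - a)) * √(f a) := by
  intro t ht
  have hexp : exp (2 * log lam * K * (t - a)) = (lam ^ (K * (t - a))) ^ 2 := by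
    rw [rpow_def_of_pos hlam, ← exp_nat_mul]
    ring_nf
  calc √(f t) ≤ √(f a * (lam ^ (K * (t - a))) ^ 2) :=
        sqrt_le_sqrt (hexp ▸ le_mul_exp_of_hasDerivAt_le_mul hf bound t ht)
    _ = lam ^ (K * (t - a)) * √(f a) := by
        rw [sqrt_mul' _ (sq_nonneg _), sqrt_sq (rpow_nonneg hlam.le _), mul_comm]

open KatokSlowDown in
lemma variational_sqrt_le {lam α r₀ t₀ t₁ K : ℝ} {s₁ s₂ ζ₁ ζ₂ : ℝ → ℝ} (hlam : 1 < lam)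
    (hα : 0 < α) (hr₀ : 0 < r₀)
    (hζ₁ : ∀ t ∈ Icc t₀ t₁, HasDerivAt ζ₁ (log lam *
      ((psi α r₀ (s₁ t ^ 2 + s₂ t ^ 2) +
          2 * s₁ t ^ 2 * psiDeriv α r₀ (s₁ t ^ 2 + s₂ t ^ 2)) * ζ₁ t +
        2 * s₁ t * s₂ t * psiDeriv α r₀ (s₁ t ^ 2 + s₂ t ^ 2) * ζ₂ t)) t)
    (hζ₂ : ∀ t ∈ Icc t₀ t₁, HasDerivAt ζ₂ (-(log lam *
      (2 * s₁ t * s₂ t * psiDeriv α r₀ (s₁ t ^ 2 + s₂ t ^ 2) * ζ₁ t +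
        (psi α r₀ (s₁ t ^ 2 + s₂ t ^ 2) +
          2 * s₂ t ^ 2 * psiDeriv α r₀ (s₁ t ^ 2 + s₂ t ^ 2)) * ζ₂ t))) t)
    (hK : ∀ t ∈ Icc t₀ t₁, (1 + 2 * α) * psi α r₀ (s₁ t ^ 2 + s₂ t ^ 2) ≤ K) :
    ∀ t ∈ Icc t₀ t₁, √(ζ₁ t ^ 2 + ζ₂ t ^ 2) ≤ lam ^ (K * (t - t₀)) * √(ζ₁ t₀ ^ 2 + ζ₂ t₀ ^ 2) := by
  refine sqrt_le_rpow_mul_sqrt_of_hasDerivAt_le (by linarith) (fun t ht =>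
    ((hζ₁ t ht).pow 2).add ((hζ₂ t ht).pow 2)) fun t ht => ?_
  have hu : 0 ≤ s₁ t ^ 2 + s₂ t ^ 2 := by positivity
  have hQ := variational_quadForm_le (s₁ t) (s₂ t) (ζ₁ t) (ζ₂ t)
    (psi_nonneg (α := α) hu hr₀.le) (psiDeriv_nonneg hα.le hu hr₀.le)
  rw [mul_assoc 2 (psiDeriv _ _ _), psiDeriv_mul_self hα.ne' hu hr₀.le] at hQ
  set u := s₁ t ^ 2 + s₂ t ^ 2
  set ψ := psi α r₀ u
  set φ := psiDeriv α r₀ u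
  have hlog : 0 < log lam := log_pos hlam
  calc _ = 2 * log lam * (ζ₁ t * ((ψ + 2 * s₁ t ^ 2 * φ) * ζ₁ t + 2 * s₁ t * s₂ t * φ * ζ₂ t) -
        ζ₂ t * (2 * s₁ t * s₂ t * φ * ζ₁ t + (ψ + 2 * s₂ t ^ 2 * φ) * ζ₂ t)) := by
        push_cast; ring
    _ ≤ 2 * log lam * ((1 + 2 * α) * ψ * (ζ₁ t ^ 2 + ζ₂ t ^ 2)) := by
        gcongr; linarith
    _ ≤ 2 * log lam * K * (ζ₁ t ^ 2 + ζ₂ t ^ 2) := by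
        rw [mul_assoc _ K]; gcongr; exact hK t ht

theorem variational_growth_bound_general
    (lam α r₀ t₀ t₁ : ℝ) (hlam : 1 < lam) (hα : 0 < α)
    (hr₀ : 0 < r₀)
    (s₁ s₂ : ℝ → ℝ)
    (ζ₁ ζ₂ : ℝ → ℝ)
    (hζ₁ : ∀ t ∈ Icc t₀ t₁,
      HasDerivAt ζ₁ (Real.log lam *
        ((((s₁ t ^ 2 + s₂ t ^ 2) / r₀) ^ α +
            2 * s₁ t ^ 2 * (α / r₀ ^ α * (s₁ t ^ 2 + s₂ t ^ 2) ^ (α - 1))) * ζ₁ t +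
          2 * s₁ t * s₂ t * (α / r₀ ^ α * (s₁ t ^ 2 + s₂ t ^ 2) ^ (α - 1)) * ζ₂ t)) t)
    (hζ₂ : ∀ t ∈ Icc t₀ t₁,
      HasDerivAt ζ₂ (-(Real.log lam *
        (2 * s₁ t * s₂ t * (α / r₀ ^ α * (s₁ t ^ 2 + s₂ t ^ 2) ^ (α - 1)) * ζ₁ t +
          (((s₁ t ^ 2 + s₂ t ^ 2) / r₀) ^ α +
            2 * s₂ t ^ 2 * (α / r₀ ^ α * (s₁ t ^ 2 + s₂ t ^ 2) ^ (α - 1))) * ζ₂ t))) t) :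
    ((∀ t ∈ Icc t₀ t₁, s₁ t ^ 2 + s₂ t ^ 2 ≤ r₀ / 2) →
      ∀ t ∈ Icc t₀ t₁,
        Real.sqrt (ζ₁ t ^ 2 + ζ₂ t ^ 2) ≤
          lam ^ ((1 + 2 * α) * (t - t₀)) * Real.sqrt (ζ₁ t₀ ^ 2 + ζ₂ t₀ ^ 2)) ∧
    ((∀ t ∈ Icc t₀ t₁, s₁ t ^ 2 + s₂ t ^ 2 ≤ r₀ / 8) →
      ∀ t ∈ Icc t₀ t₁,
        Real.sqrt (ζ₁ t ^ 2 + ζ₂ t ^ 2) ≤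
          lam ^ (t - t₀) * Real.sqrt (ζ₁ t₀ ^ 2 + ζ₂ t₀ ^ 2)) := by
  constructor
  · intro hsmall
    refine variational_sqrt_le hlam hα hr₀ hζ₁ hζ₂ fun t ht => ?_
    exact mul_le_of_le_one_right (by linarith)
      (KatokSlowDown.psi_le_one hα.le hr₀ (by positivity) (by linarith [hsmall t ht]))
  · intro hsmall
    simpa using variational_sqrt_le (K := 1) hlam hα hr₀ hζ₁ hζ₂ fun t ht =>
      KatokSlowDown.one_add_two_mul_mul_psi_le_one hα.le hr₀ (by positivity) (hsmall t ht)

/-- The growth bounds on solutions of the variational equations of the explicit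
slow-down system used in the proof that `t₀ → -∞` as `r₀ → 0` in
"Thermodynamics of the Katok Map": (a) inside `D_{r₀/2}` the norm grows at most
like `λ^{(1+2α)(t-t₀)}`, and (b) inside `D_{r₀/8}` at most like `λ^{t-t₀}`. -/
theorem variational_growth_bound
    (lam α r₀ t₀ t₁ : ℝ) (hlam : 1 < lam) (hα : 0 < α) (hα1 : α < 1)
    (hr₀ : 0 < r₀) (hr₀1 : r₀ < 1) (ht : t₀ ≤ t₁)
    (s₁ s₂ : ℝ → ℝ)
    (hs₁ : ∀ t ∈ Icc t₀ t₁,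
      HasDerivAt s₁ ((Real.log lam / r₀ ^ α) * s₁ t * (s₁ t ^ 2 + s₂ t ^ 2) ^ α) t)
    (hs₂ : ∀ t ∈ Icc t₀ t₁,
      HasDerivAt s₂ (-((Real.log lam / r₀ ^ α) * s₂ t * (s₁ t ^ 2 + s₂ t ^ 2) ^ α)) t)
    (ζ₁ ζ₂ : ℝ → ℝ)
    (hζ₁ : ∀ t ∈ Icc t₀ t₁,
      HasDerivAt ζ₁ (Real.log lam *
        ((((s₁ t ^ 2 + s₂ t ^ 2) / r₀) ^ α +
            2 * s₁ t ^ 2 * (α / r₀ ^ α * (s₁ t ^ 2 + s₂ t ^ 2) ^ (α - 1))) * ζ₁ t +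
          2 * s₁ t * s₂ t * (α / r₀ ^ α * (s₁ t ^ 2 + s₂ t ^ 2) ^ (α - 1)) * ζ₂ t)) t)
    (hζ₂ : ∀ t ∈ Icc t₀ t₁,
      HasDerivAt ζ₂ (-(Real.log lam *
        (2 * s₁ t * s₂ t * (α / r₀ ^ α * (s₁ t ^ 2 + s₂ t ^ 2) ^ (α - 1)) * ζ₁ t +
          (((s₁ t ^ 2 + s₂ t ^ 2) / r₀) ^ α +
            2 * s₂ t ^ 2 * (α / r₀ ^ α * (s₁ t ^ 2 + s₂ t ^ 2) ^ (α - 1))) * ζ₂ t))) t) :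
    ((∀ t ∈ Icc t₀ t₁, s₁ t ^ 2 + s₂ t ^ 2 ≤ r₀ / 2) →
      ∀ t ∈ Icc t₀ t₁,
        Real.sqrt (ζ₁ t ^ 2 + ζ₂ t ^ 2) ≤
          lam ^ ((1 + 2 * α) * (t - t₀)) * Real.sqrt (ζ₁ t₀ ^ 2 + ζ₂ t₀ ^ 2)) ∧
    ((∀ t ∈ Icc t₀ t₁, s₁ t ^ 2 + s₂ t ^ 2 ≤ r₀ / 8) →
      ∀ t ∈ Icc t₀ t₁,
        Real.sqrt (ζ₁ t ^ 2 + ζ₂ t ^ 2) ≤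
          lam ^ (t - t₀) * Real.sqrt (ζ₁ t₀ ^ 2 + ζ₂ t₀ ^ 2)) :=
  variational_growth_bound_general lam α r₀ t₀ t₁ hlam hα hr₀ s₁ s₂ ζ₁ ζ₂ hζ₁ hζ₂
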